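/- arXiv:1702.01878 — 9 statements merged into one kernel-verified Lean document; each statement's English description precedes it below -/
import Mathlib

section
/- For every vertex p_i (i ∈ {1,2,3,4}) of the 4-path P_4 and every order-label l ∈ {1,2,3,4}, the ordered Ramsey number of the (p_i,l)-ordering of P_4 equals 5. That is: (a) every ordered 2-coloring on 5 vertices contains distinct vertices x1,x2,x3,x4 such that the edges {x1,x2},{x2,x3},{x3,x4} all have the same color and x_i is the l-th smallest of x1,x2,x3,x4; and (b) there exists an ordered 2-coloring on 4 vertices containing no such configuration. -/
/-!
Upper bound: reversing the path, reversing the order of the vertices (which turns rank `r` into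
`3 - r`) and swapping the two colors reduce the claim to a path vertex `k ≤ 1`, a rank `r ≤ 1`
and colorings in which the edge `01` has color `false`; these 512 colorings are checked by
`decide`.

Lower bound: color the triangle on `{0, 1, 2}` with `true` and the star at `3` with `false`.
The first and last edges of a path through all four vertices form a perfect matching, and exactly
one of its two edges meets `3`, so they never have the same color.
-/

open Finset

def HasOrderedMonoP4 {n : ℕ} (c : Fin n → Fin n → Bool) (k : Fin 4) (r : ℕ) : Prop :=
  ∃ x : Fin 4 → Fin n, Function.Injective x ∧
    c (x 0) (x 1) = c (x 1) (x 2) ∧ c (x 1) (x 2) = c (x 2) (x 3) ∧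
    #{j | x j < x k} = r

section Rank

variable {α : Type*} [LinearOrder α] {m : ℕ}

lemma card_lt_add_card_gt_add_one {x : Fin m → α} (hx : Function.Injective x) (k : Fin m) :
    #{j | x j < x k} + #{j | x k < x j} + 1 = m := by
  have hge : #{j | ¬x j < x k} = #{j | x k < x j} + 1 := by
    rw [← card_insert_of_notMem (s := {j | x k < x j}) (a := k) (by simp)]
    congr 1
    ext j
    simp only [mem_filter, mem_univ, true_and, mem_insert, not_lt, le_iff_lt_or_eq, hx.eq_iff]
    tauto
  rw [add_assoc, ← hge, card_filter_add_card_filter_not, card_univ, Fintype.card_fin]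

lemma card_lt_comp_rev (x : Fin m → α) (k : Fin m) :
    #{j | x (Fin.rev j) < x k} = #{j | x j < x k} := by
  simp only [card_filter]
  exact Equiv.sum_comp Fin.revPerm (fun j => if x j < x k then 1 else 0)

end Rank

section Symmetries

variable {n : ℕ} {c : Fin n → Fin n → Bool} {k : Fin 4} {r : ℕ}

lemma HasOrderedMonoP4.of_not (h : HasOrderedMonoP4 (fun a b => !c a b) k r) :
    HasOrderedMonoP4 c k r := by
  obtain ⟨x, hx, h₀, h₁, hr⟩ := h
  exact ⟨x, hx, Bool.not_inj_iff.mp h₀, Bool.not_inj_iff.mp h₁, hr⟩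

lemma HasOrderedMonoP4.rev (hc : ∀ a b, c a b = c b a) (h : HasOrderedMonoP4 c k r) :
    HasOrderedMonoP4 c k.rev r := by
  obtain ⟨x, hx, h₀, h₁, hr⟩ := h
  refine ⟨x ∘ Fin.rev, hx.comp Fin.rev_injective, ?_, ?_, ?_⟩
  · simpa [hc, eq_comm] using h₁
  · simpa [hc, eq_comm] using h₀
  · simpa only [Function.comp_apply, Fin.rev_rev, card_lt_comp_rev] using hr

lemma HasOrderedMonoP4.of_rev_coloring (h : HasOrderedMonoP4 (fun a b => c a.rev b.rev) k r) :
    HasOrderedMonoP4 c k (3 - r) := by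
  obtain ⟨x, hx, h₀, h₁, hr⟩ := h
  refine ⟨Fin.rev ∘ x, Fin.rev_injective.comp hx, h₀, h₁, ?_⟩
  have := card_lt_add_card_gt_add_one hx k
  simp only [Function.comp_apply, Fin.rev_lt_rev]
  omega

lemma HasOrderedMonoP4.congr {c' : Fin n → Fin n → Bool} (hcc' : ∀ a b, a ≠ b → c a b = c' a b)
    (h : HasOrderedMonoP4 c k r) : HasOrderedMonoP4 c' k r := by
  obtain ⟨x, hx, h₀, h₁, hr⟩ := h
  have hx' : ∀ i j, i ≠ j → c (x i) (x j) = c' (x i) (x j) := fun i j hij => hcc' _ _ (hx.ne hij)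
  refine ⟨x, hx, ?_, ?_, hr⟩
  · rwa [← hx' 0 1 (by decide), ← hx' 1 2 (by decide)]
  · rwa [← hx' 1 2 (by decide), ← hx' 2 3 (by decide)]

end Symmetries

def starColoring {V : Type*} [DecidableEq V] (v a b : V) : Bool :=
  decide (a ≠ v ∧ b ≠ v)

lemma starColoring_comm {V : Type*} [DecidableEq V] (v a b : V) :
    starColoring v a b = starColoring v b a := by
  simp only [starColoring, and_comm]

lemma starColoring_ne {V : Type*} [DecidableEq V] {v : V} {x : Fin 4 → V}
    (hx : Function.Injective x) (hv : v ∈ Set.range x) :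
    starColoring v (x 0) (x 1) ≠ starColoring v (x 2) (x 3) := by
  obtain ⟨j, rfl⟩ := hv
  fin_cases j <;> simp [starColoring, hx.ne_iff]

lemma not_hasOrderedMonoP4_starColoring (k : Fin 4) (r : ℕ) :
    ¬ HasOrderedMonoP4 (starColoring (3 : Fin 4)) k r := by
  rintro ⟨x, hx, h₀, h₁, -⟩
  exact starColoring_ne hx (Finite.injective_iff_surjective.mp hx 3) (h₀.trans h₁)

def k5Coloring (b₀₁ b₀₂ b₀₃ b₀₄ b₁₂ b₁₃ b₁₄ b₂₃ b₂₄ b₃₄ : Bool) : Fin 5 → Fin 5 → Bool :=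
  ![![false, b₀₁, b₀₂, b₀₃, b₀₄],
    ![b₀₁, false, b₁₂, b₁₃, b₁₄],
    ![b₀₂, b₁₂, false, b₂₃, b₂₄],
    ![b₀₃, b₁₃, b₂₃, false, b₃₄],
    ![b₀₄, b₁₄, b₂₄, b₃₄, false]]

lemma eq_k5Coloring {c : Fin 5 → Fin 5 → Bool} (hc : ∀ a b, c a b = c b a) {a b : Fin 5}
    (hab : a ≠ b) :
    c a b = k5Coloring (c 0 1) (c 0 2) (c 0 3) (c 0 4) (c 1 2) (c 1 3) (c 1 4) (c 2 3) (c 2 4)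
      (c 3 4) a b := by
  fin_cases a <;> fin_cases b <;> first | exact absurd rfl hab | rfl | exact hc _ _

/-- `HasOrderedMonoP4` with the quantifiers nested so that `decide` prunes partial paths early. -/
def HasOrderedMonoP4Search {n : ℕ} (c : Fin n → Fin n → Bool) (k : Fin 4) (r : ℕ) : Prop :=
  ∃ a b : Fin n, a ≠ b ∧
    ∃ d : Fin n, a ≠ d ∧ b ≠ d ∧ c a b = c b d ∧
      ∃ e : Fin n, a ≠ e ∧ b ≠ e ∧ d ≠ e ∧ c b d = c d e ∧
        #{j | ![a, b, d, e] j < ![a, b, d, e] k} = r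

instance {n : ℕ} (c : Fin n → Fin n → Bool) (k : Fin 4) (r : ℕ) :
    Decidable (HasOrderedMonoP4Search c k r) := by
  unfold HasOrderedMonoP4Search; infer_instance

lemma HasOrderedMonoP4Search.hasOrderedMonoP4 {n : ℕ} {c : Fin n → Fin n → Bool} {k : Fin 4}
    {r : ℕ} (h : HasOrderedMonoP4Search c k r) : HasOrderedMonoP4 c k r := by
  obtain ⟨a, b, hab, d, had, hbd, h₀, e, hae, hbe, hde, h₁, hr⟩ := h
  refine ⟨![a, b, d, e], ?_, h₀, h₁, hr⟩
  intro i j hij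
  fin_cases i <;> fin_cases j <;> simp_all [eq_comm]

lemma hasOrderedMonoP4Search_k5Coloring :
    ∀ b₀₂ b₀₃ b₀₄ b₁₂ b₁₃ b₁₄ b₂₃ b₂₄ b₃₄ : Bool, ∀ k : Fin 4, k ≤ 1 → ∀ r ≤ 1,
      HasOrderedMonoP4Search (k5Coloring false b₀₂ b₀₃ b₀₄ b₁₂ b₁₃ b₁₄ b₂₃ b₂₄ b₃₄) k r := by
  decide +kernel

lemma hasOrderedMonoP4_fin_five {c : Fin 5 → Fin 5 → Bool} (hc : ∀ a b, c a b = c b a)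
    (k : Fin 4) {r : ℕ} (hr : r ≤ 3) : HasOrderedMonoP4 c k r := by
  wlog hk : k ≤ 1 generalizing k
  · simpa only [Fin.rev_rev] using (this k.rev (by fin_cases k <;> simp_all)).rev hc
  wlog hr' : r ≤ 1 generalizing c r
  · have := this (c := fun a b => c a.rev b.rev) (fun a b => hc _ _) (r := 3 - r) (by omega)
      (by omega)
    simpa only [Nat.sub_sub_self hr] using this.of_rev_coloring
  wlog h01 : c 0 1 = false generalizing c
  · exact (this (c := fun a b => !c a b) (fun a b => by rw [hc]) (by simpa using h01)).of_not
  have := hasOrderedMonoP4Search_k5Coloring (c 0 2) (c 0 3) (c 0 4) (c 1 2) (c 1 3) (c 1 4)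
    (c 2 3) (c 2 4) (c 3 4) k hk r hr'
  rw [← h01] at this
  exact this.hasOrderedMonoP4.congr fun a b hab => (eq_k5Coloring hc hab).symm

/-- For every vertex `p_i` (`i ∈ {1,2,3,4}`) of the path `P₄` and every order-label
`l ∈ {1,2,3,4}`, the ordered Ramsey number of the `(p_i, l)`-ordering of `P₄` equals `5`:
(a) every ordered 2-coloring on `5` vertices contains a monochromatic path
`x 0 — x 1 — x 2 — x 3` on distinct vertices in which the `(i-1)`-indexed vertex is the
`l`-th smallest (exactly `l - 1` of the chosen vertices are smaller than it), and
(b) some ordered 2-coloring on `4` vertices contains no such configuration. -/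
theorem ordered_ramsey_P4_one_ordering_eq_five
    (i l : ℕ) (hi' : i ≤ 4) (hl' : l ≤ 4) :
    (∀ c : Fin 5 → Fin 5 → Bool, (∀ a b, c a b = c b a) →
      ∃ x : Fin 4 → Fin 5, Function.Injective x ∧
        c (x 0) (x 1) = c (x 1) (x 2) ∧ c (x 1) (x 2) = c (x 2) (x 3) ∧
        (Finset.univ.filter fun j => x j < x ⟨i - 1, by omega⟩).card = l - 1) ∧
    (∃ c : Fin 4 → Fin 4 → Bool, (∀ a b, c a b = c b a) ∧
      ¬ ∃ x : Fin 4 → Fin 4, Function.Injective x ∧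
        c (x 0) (x 1) = c (x 1) (x 2) ∧ c (x 1) (x 2) = c (x 2) (x 3) ∧
        (Finset.univ.filter fun j => x j < x ⟨i - 1, by omega⟩).card = l - 1) :=
  ⟨fun _ hc => hasOrderedMonoP4_fin_five hc _ (by omega),
    ⟨starColoring 3, starColoring_comm 3, not_hasOrderedMonoP4_starColoring _ _⟩⟩
end

section
/- The ordered Ramsey number of the (s_1,2)-ordering of the 4-star equals 6: every ordered 2-coloring on 6 vertices contains distinct vertices x1,x2,x3,x4 such that the edges {x1,x2},{x2,x3},{x2,x4} all have the same color and x1 is the 2nd smallest of x1,x2,x3,x4; and there exists an ordered 2-coloring on 5 vertices containing no such configuration. -/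
/-!
Upper bound: in a coloring of `Fin 6`, by pigeonhole three of the five edges at the vertex `0`
share a color. Taking `0` as the center and the smallest of the three other endpoints as `s₁`
gives the configuration, since `s₁` is then preceded only by `0`.
Lower bound: an explicit coloring of `Fin 5`, checked by exhaustion.
-/

open Finset

/-- A monochromatic copy in `c` of the 4-star with edges `s₁s₂, s₂s₃, s₂s₄` in which `s₁` is the
second smallest vertex; `x1, …, x4` play `s₁, …, s₄`. -/
def HasMonoStarS1Two {n : ℕ} {β : Type*} (c : Fin n → Fin n → β) : Prop :=
  ∃ x1 x2 x3 x4 : Fin n,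
    x1 ≠ x2 ∧ x1 ≠ x3 ∧ x1 ≠ x4 ∧ x2 ≠ x3 ∧ x2 ≠ x4 ∧ x3 ≠ x4 ∧
    c x1 x2 = c x2 x3 ∧ c x2 x3 = c x2 x4 ∧
    ((if x2 < x1 then 1 else 0) + (if x3 < x1 then 1 else 0) + (if x4 < x1 then 1 else 0) : ℕ) = 1

theorem exists_lt_lt_ne_eq_eq_of_two_mul_card_lt {α β : Type*} [LinearOrder α] [Fintype α]
    [Fintype β] [DecidableEq β] (f : α → β) (h : Fintype.card β * 2 < Fintype.card α) :
    ∃ i j k, i < j ∧ i < k ∧ j ≠ k ∧ f j = f i ∧ f k = f i := by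
  obtain ⟨y, hy⟩ := Fintype.exists_lt_card_fiber_of_mul_lt_card f h
  set s := ({x | f x = y} : Finset α)
  have hs : s.Nonempty := card_pos.1 (by omega)
  set i := s.min' hs
  have hi : f i = y := (mem_filter.1 (s.min'_mem hs)).2
  have hrest : 1 < #(s.erase i) := by rw [card_erase_of_mem (s.min'_mem hs)]; omega
  obtain ⟨j, hj, k, hk, hjk⟩ := one_lt_card.1 hrest
  have above : ∀ x ∈ s.erase i, i < x ∧ f x = f i := fun x hx =>
    ⟨lt_of_le_of_ne (s.min'_le x (mem_of_mem_erase hx)) (ne_of_mem_erase hx).symm,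
      hi ▸ (mem_filter.1 (mem_of_mem_erase hx)).2⟩
  exact ⟨i, j, k, (above j hj).1, (above k hk).1, hjk, (above j hj).2, (above k hk).2⟩

theorem hasMonoStarS1Two_of_two_mul_card_lt {n : ℕ} {β : Type*} [Fintype β] [DecidableEq β]
    (hn : Fintype.card β * 2 < n) (c : Fin (n + 1) → Fin (n + 1) → β)
    (hc : ∀ a b, c a b = c b a) : HasMonoStarS1Two c := by
  obtain ⟨i, j, k, hij, hik, hjk, hj, hk⟩ :=
    exists_lt_lt_ne_eq_eq_of_two_mul_card_lt (fun i : Fin n => c 0 i.succ) (by simpa using hn)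
  refine ⟨i.succ, 0, j.succ, k.succ, i.succ_ne_zero, ?_, ?_, j.succ_ne_zero.symm,
    k.succ_ne_zero.symm, ?_, ?_, ?_, ?_⟩
  · exact (Fin.succ_lt_succ_iff.2 hij).ne
  · exact (Fin.succ_lt_succ_iff.2 hik).ne
  · exact Fin.succ_injective _ |>.ne hjk
  · rw [hc]; exact hj.symm
  · exact hj.trans hk.symm
  · have h1 : (0 : Fin (n + 1)) < i.succ := i.succ_pos
    have h2 : ¬ j.succ < i.succ := not_lt.2 (Fin.succ_le_succ_iff.2 hij.le)
    have h3 : ¬ k.succ < i.succ := not_lt.2 (Fin.succ_le_succ_iff.2 hik.le)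
    simp [h1, h2, h3]

/-- The `true` edges form the triangle `{0, 3, 4}` and the edge `{1, 2}`. -/
def starS1TwoFreeColoring : Fin 5 → Fin 5 → Bool :=
  ![![false, false, false, true, true],
    ![false, false, true, false, false],
    ![false, true, false, false, false],
    ![true, false, false, false, true],
    ![true, false, false, true, false]]

theorem starS1TwoFreeColoring_symm (a b : Fin 5) :
    starS1TwoFreeColoring a b = starS1TwoFreeColoring b a := by
  revert a b; decide

theorem not_hasMonoStarS1Two_starS1TwoFreeColoring :
    ¬ HasMonoStarS1Two starS1TwoFreeColoring := by
  unfold HasMonoStarS1Two; decide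

/-- The ordered Ramsey number of the (s₁,2)-ordering of the 4-star equals 6: every ordered 2-coloring on 6 vertices contains distinct vertices x1,x2,x3,x4 (playing s1,s2,s3,s4 of the 4-star, edges {s1,s2},{s2,s3},{s2,s4}) whose three edges all have the same color and such that x1 is the 2nd smallest of the four (exactly one other chosen vertex is smaller); and some ordered 2-coloring on 5 vertices contains no such configuration. -/
theorem ordered_ramsey_star_s1_2_eq_six :
    (∀ c : Fin 6 → Fin 6 → Bool, (∀ a b, c a b = c b a) →
      ∃ x1 x2 x3 x4 : Fin 6,
        x1 ≠ x2 ∧ x1 ≠ x3 ∧ x1 ≠ x4 ∧ x2 ≠ x3 ∧ x2 ≠ x4 ∧ x3 ≠ x4 ∧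
        c x1 x2 = c x2 x3 ∧ c x2 x3 = c x2 x4 ∧
        ((if x2 < x1 then 1 else 0) + (if x3 < x1 then 1 else 0) + (if x4 < x1 then 1 else 0) : ℕ) = 1) ∧
    (∃ c : Fin 5 → Fin 5 → Bool, (∀ a b, c a b = c b a) ∧
      ¬ ∃ x1 x2 x3 x4 : Fin 5,
        x1 ≠ x2 ∧ x1 ≠ x3 ∧ x1 ≠ x4 ∧ x2 ≠ x3 ∧ x2 ≠ x4 ∧ x3 ≠ x4 ∧
        c x1 x2 = c x2 x3 ∧ c x2 x3 = c x2 x4 ∧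
        ((if x2 < x1 then 1 else 0) + (if x3 < x1 then 1 else 0) + (if x4 < x1 then 1 else 0) : ℕ) = 1) :=
  ⟨fun c hc => hasMonoStarS1Two_of_two_mul_card_lt (by simp) c hc,
    ⟨starS1TwoFreeColoring, starS1TwoFreeColoring_symm,
      not_hasMonoStarS1Two_starS1TwoFreeColoring⟩⟩
end

section
/- The ordered Ramsey number of the (s_1,1)-ordering of the 4-star equals 6: every ordered 2-coloring on 6 vertices contains distinct vertices x1,x2,x3,x4 such that the edges {x1,x2},{x2,x3},{x2,x4} all have the same color and x1 is the smallest of x1,x2,x3,x4; and there exists an ordered 2-coloring on 5 vertices containing no such configuration. -/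
/-! Take a symmetric coloring of `x₀ < x₁ < ⋯ < x₅` with no monochromatic star centred at `x₃`
whose smallest vertex is a leaf. Among the leaves `x₂, x₄, x₅` two share a color, which must
differ from both `c x₀ x₃` and `c x₁ x₃` (else the star from `x₀` or `x₁` appears), so these two
colors agree. Then `x₁` is already a leaf of color `c x₀ x₃` over `x₀`, forcing `x₂, x₄, x₅` all
to take the other color, and `x₂, x₃, x₄, x₅` is a monochromatic star after all.

On five vertices the complete bipartite graph between `{1, 2}` and `{3, 4}` and its complement
form a coloring without such a star. -/

section LinearOrder

variable {α : Type*} [LinearOrder α]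

def HasMonoStar (c : α → α → Bool) : Prop :=
  ∃ x₁ x₂ x₃ x₄ : α, x₁ < x₂ ∧ x₁ < x₃ ∧ x₁ < x₄ ∧ x₂ ≠ x₃ ∧ x₂ ≠ x₄ ∧ x₃ ≠ x₄ ∧
    c x₁ x₂ = c x₂ x₃ ∧ c x₂ x₃ = c x₂ x₄

theorem hasMonoStar_iff (c : α → α → Bool) :
    HasMonoStar c ↔ ∃ x1 x2 x3 x4 : α,
      x1 ≠ x2 ∧ x1 ≠ x3 ∧ x1 ≠ x4 ∧ x2 ≠ x3 ∧ x2 ≠ x4 ∧ x3 ≠ x4 ∧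
      c x1 x2 = c x2 x3 ∧ c x2 x3 = c x2 x4 ∧
      ((if x2 < x1 then 1 else 0) + (if x3 < x1 then 1 else 0) + (if x4 < x1 then 1 else 0) : ℕ)
        = 0 := by
  simp only [HasMonoStar, Nat.add_eq_zero_iff, ite_eq_right_iff, one_ne_zero, imp_false, not_lt]
  constructor
  · rintro ⟨x₁, x₂, x₃, x₄, h₂, h₃, h₄, h₂₃, h₂₄, h₃₄, e, e'⟩
    exact ⟨x₁, x₂, x₃, x₄, h₂.ne, h₃.ne, h₄.ne, h₂₃, h₂₄, h₃₄, e, e', ⟨h₂.le, h₃.le⟩, h₄.le⟩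
  · rintro ⟨x₁, x₂, x₃, x₄, h₂, h₃, h₄, h₂₃, h₂₄, h₃₄, e, e', ⟨l₂, l₃⟩, l₄⟩
    exact ⟨x₁, x₂, x₃, x₄, l₂.lt_of_ne h₂, l₃.lt_of_ne h₃, l₄.lt_of_ne h₄, h₂₃, h₂₄, h₃₄, e, e'⟩

variable {c : α → α → Bool}

theorem ne_of_not_hasMonoStar (h : ¬HasMonoStar c) {u v w w' : α} (hv : u < v) (hw : u < w)
    (hw' : u < w') (hvw : v ≠ w) (hvw' : v ≠ w') (hww' : w ≠ w') (e : c v w = c u v) :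
    c v w' ≠ c u v :=
  fun e' ↦ h ⟨u, v, w, w', hv, hw, hw', hvw, hvw', hww', e.symm, e.trans e'.symm⟩

theorem color_eq_of_not_hasMonoStar (h : ¬HasMonoStar c) {a b v w₁ w₂ w₃ : α} (hab : a < b)
    (hbv : b < v) (h₁ : b < w₁) (h₂ : b < w₂) (h₃ : b < w₃) (hv₁ : v ≠ w₁) (hv₂ : v ≠ w₂)
    (hv₃ : v ≠ w₃) (h₁₂ : w₁ ≠ w₂) (h₁₃ : w₁ ≠ w₃) (h₂₃ : w₂ ≠ w₃) :
    c b v = c a v := by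
  by_contra hne
  have distinct {w w' : α} (hw : b < w) (hw' : b < w') (hvw : v ≠ w) (hvw' : v ≠ w')
      (hww' : w ≠ w') : c v w ≠ c v w' := by
    intro e
    by_cases ha : c v w = c a v
    · exact ne_of_not_hasMonoStar h (hab.trans hbv) (hab.trans hw) (hab.trans hw') hvw hvw' hww'
        ha (e ▸ ha)
    · have hb : c v w = c b v := (Bool.eq_not_iff.2 ha).trans (Bool.eq_not_iff.2 hne).symm
      exact ne_of_not_hasMonoStar h hbv hw hw' hvw hvw' hww' hb (e ▸ hb)
  have pigeonhole : ∀ p q r : Bool, p = q ∨ p = r ∨ q = r := by decide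
  rcases pigeonhole (c v w₁) (c v w₂) (c v w₃) with e | e | e
  · exact distinct h₁ h₂ hv₁ hv₂ h₁₂ e
  · exact distinct h₁ h₃ hv₁ hv₃ h₁₃ e
  · exact distinct h₂ h₃ hv₂ hv₃ h₂₃ e

theorem hasMonoStar_of_lt (hc : ∀ a b, c a b = c b a) {x₀ x₁ x₂ x₃ x₄ x₅ : α}
    (h₀₁ : x₀ < x₁) (h₁₂ : x₁ < x₂) (h₂₃ : x₂ < x₃) (h₃₄ : x₃ < x₄) (h₄₅ : x₄ < x₅) :
    HasMonoStar c := by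
  by_contra h
  have h₁₃ := h₁₂.trans h₂₃
  have h₁₄ := h₁₃.trans h₃₄
  have h₁₅ := h₁₄.trans h₄₅
  have h₂₄ := h₂₃.trans h₃₄
  have h₃₅ := h₃₄.trans h₄₅
  have hcenter : c x₃ x₁ = c x₀ x₃ := (hc _ _).trans <|
    color_eq_of_not_hasMonoStar h h₀₁ h₁₃ h₁₂ h₁₄ h₁₅ h₂₃.ne' h₃₄.ne h₃₅.ne h₂₄.ne
      (h₂₄.trans h₄₅).ne h₄₅.ne
  have hleaf {w : α} (hw : x₁ < w) (hvw : x₃ ≠ w) : c x₃ w = !c x₀ x₃ :=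
    Bool.eq_not_iff.2 <| ne_of_not_hasMonoStar h (h₀₁.trans h₁₃) h₀₁ (h₀₁.trans hw) h₁₃.ne'
      hvw hw.ne hcenter
  exact h ⟨x₂, x₃, x₄, x₅, h₂₃, h₂₄, h₂₃.trans h₃₅, h₃₄.ne, h₃₅.ne, h₄₅.ne,
    (hc _ _).trans ((hleaf h₁₂ h₂₃.ne').trans (hleaf h₁₄ h₃₄.ne).symm),
    (hleaf h₁₄ h₃₄.ne).trans (hleaf h₁₅ h₃₅.ne).symm⟩

end LinearOrder

def starFreeColoring : Fin 5 → Fin 5 → Bool := fun a b ↦ decide (a ≠ 0 ∧ b ≠ 0 ∧ (a ≤ 2 ↔ 3 ≤ b))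

theorem starFreeColoring_symm (a b : Fin 5) : starFreeColoring a b = starFreeColoring b a := by
  revert a b; decide

theorem not_hasMonoStar_starFreeColoring : ¬HasMonoStar starFreeColoring := by
  unfold HasMonoStar; decide

/-- The ordered Ramsey number of the (s₁,1)-ordering of the 4-star equals 6: every ordered 2-coloring on 6 vertices contains distinct vertices x1,x2,x3,x4 (playing s1,s2,s3,s4 of the 4-star, edges {s1,s2},{s2,s3},{s2,s4}) whose three edges all have the same color and such that x1 is the smallest of the four; and some ordered 2-coloring on 5 vertices contains no such configuration. -/
theorem ordered_ramsey_star_s1_1_eq_six :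
    (∀ c : Fin 6 → Fin 6 → Bool, (∀ a b, c a b = c b a) →
      ∃ x1 x2 x3 x4 : Fin 6,
        x1 ≠ x2 ∧ x1 ≠ x3 ∧ x1 ≠ x4 ∧ x2 ≠ x3 ∧ x2 ≠ x4 ∧ x3 ≠ x4 ∧
        c x1 x2 = c x2 x3 ∧ c x2 x3 = c x2 x4 ∧
        ((if x2 < x1 then 1 else 0) + (if x3 < x1 then 1 else 0) + (if x4 < x1 then 1 else 0) : ℕ) = 0) ∧
    (∃ c : Fin 5 → Fin 5 → Bool, (∀ a b, c a b = c b a) ∧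
      ¬ ∃ x1 x2 x3 x4 : Fin 5,
        x1 ≠ x2 ∧ x1 ≠ x3 ∧ x1 ≠ x4 ∧ x2 ≠ x3 ∧ x2 ≠ x4 ∧ x3 ≠ x4 ∧
        c x1 x2 = c x2 x3 ∧ c x2 x3 = c x2 x4 ∧
        ((if x2 < x1 then 1 else 0) + (if x3 < x1 then 1 else 0) + (if x4 < x1 then 1 else 0) : ℕ) = 0) := by
  refine ⟨fun c hc ↦ ?_, starFreeColoring, starFreeColoring_symm, ?_⟩
  · rw [← hasMonoStar_iff]
    exact hasMonoStar_of_lt hc (x₀ := 0) (x₁ := 1) (x₂ := 2) (x₃ := 3) (x₄ := 4) (x₅ := 5)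
      (by decide) (by decide) (by decide) (by decide) (by decide)
  · rw [← hasMonoStar_iff]
    exact not_hasMonoStar_starFreeColoring
end

section
/- The ordered Ramsey number of the (e_3,2)-ordering of the 3-pan is at most 9: every ordered 2-coloring on 9 vertices contains distinct vertices x1,x2,x3,x4 such that the edges {x1,x2},{x2,x3},{x2,x4},{x3,x4} all have the same color and x3 is the 2nd smallest of x1,x2,x3,x4. -/
/-!
Since `R(3,3) = 6`, the vertices `3, …, 8` span a monochromatic triangle `a < b < d`, say red.
Any monochromatic triangle `p < q < r` yields the pan as soon as a further vertex `w` of the same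
colour is joined to `q` or `r` with `w < p`, or to `p` with `q < w`, `w ≠ r`. Avoiding this forces
in turn: every edge from `{0, 1, 2}` to `b` and `d` is blue; `{0, 1, 2}` is red (a blue edge `u v`
there gives the blue triangle `u v d` with `b` joined to `u`); every edge from `0` to `{3, …, 8}`
is blue; every edge inside `{3, …, 6}` is red (a blue edge `u v` there gives the blue triangle
`0 u v` with `7` joined to `0`). But then the red triangle `3 4 5` with `6` joined to `3` is a pan.
-/

section

variable {α : Type*}

def IsMonoTriangle (c : α → α → Bool) (k : Bool) (p q r : α) : Prop :=
  c p q = k ∧ c p r = k ∧ c q r = k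

theorem isMonoTriangle_not_of_ne {c : α → α → Bool} {k : Bool} {p q r : α} (hpq : c p q ≠ k)
    (hpr : c p r ≠ k) (hqr : c q r ≠ k) : IsMonoTriangle c (!k) p q r :=
  ⟨Bool.eq_not.2 hpq, Bool.eq_not.2 hpr, Bool.eq_not.2 hqr⟩

variable [LinearOrder α]

/-- A monochromatic 3-pan `x1 x2 x3 x4` in its `(e₃,2)`-ordering. -/
def HasMonoOrderedPan (c : α → α → Bool) : Prop :=
  ∃ x1 x2 x3 x4 : α,
    x1 ≠ x2 ∧ x1 ≠ x3 ∧ x1 ≠ x4 ∧ x2 ≠ x3 ∧ x2 ≠ x4 ∧ x3 ≠ x4 ∧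
    c x1 x2 = c x2 x3 ∧ c x2 x3 = c x2 x4 ∧ c x2 x4 = c x3 x4 ∧
    ((if x1 < x3 then 1 else 0) + (if x2 < x3 then 1 else 0) + (if x4 < x3 then 1 else 0) : ℕ) = 1

variable {c : α → α → Bool}

theorem exists_isMonoTriangle_of_star {k : Bool} {v n₁ n₂ n₃ : α} (hv : v < n₁) (h₁₂ : n₁ < n₂)
    (h₂₃ : n₂ < n₃) (hv₁ : c v n₁ = k) (hv₂ : c v n₂ = k) (hv₃ : c v n₃ = k) :
    ∃ a b d, v ≤ a ∧ a < b ∧ b < d ∧ ∃ k, IsMonoTriangle c k a b d := by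
  by_cases e₁₂ : c n₁ n₂ = k
  · exact ⟨v, n₁, n₂, le_rfl, hv, h₁₂, k, hv₁, hv₂, e₁₂⟩
  by_cases e₁₃ : c n₁ n₃ = k
  · exact ⟨v, n₁, n₃, le_rfl, hv, h₁₂.trans h₂₃, k, hv₁, hv₃, e₁₃⟩
  by_cases e₂₃ : c n₂ n₃ = k
  · exact ⟨v, n₂, n₃, le_rfl, hv.trans h₁₂, h₂₃, k, hv₂, hv₃, e₂₃⟩
  exact ⟨n₁, n₂, n₃, hv.le, h₁₂, h₂₃, !k, isMonoTriangle_not_of_ne e₁₂ e₁₃ e₂₃⟩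

theorem exists_isMonoTriangle_of_five_le_card {v : α} {s : Finset α} (hs : ∀ n ∈ s, v < n)
    (hcard : 5 ≤ s.card) : ∃ a b d, v ≤ a ∧ a < b ∧ b < d ∧ ∃ k, IsMonoTriangle c k a b d := by
  obtain ⟨k, -, hk⟩ := Finset.exists_lt_card_fiber_of_mul_lt_card_of_maps_to
    (s := s) (t := Finset.univ) (f := c v) (n := 2) (fun _ _ => Finset.mem_univ _)
    (by rw [Finset.card_univ, Fintype.card_bool]; omega)
  set t := s.filter (c v · = k)
  let n : Fin 3 ↪o α := (Fin.castLEOrderEmb hk).trans (t.orderEmbOfFin rfl)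
  have hn : ∀ i, v < n i ∧ c v (n i) = k := fun i => by
    have hmem := t.orderEmbOfFin_mem rfl (Fin.castLE hk i)
    simp only [t, Finset.mem_filter] at hmem
    exact ⟨hs _ hmem.1, hmem.2⟩
  exact exists_isMonoTriangle_of_star (hn 0).1 (n.lt_iff_lt.2 (by decide))
    (n.lt_iff_lt.2 (by decide : (1 : Fin 3) < 2)) (hn 0).2 (hn 1).2 (hn 2).2

theorem hasMonoOrderedPan_of_pendant_below (hc : ∀ a b, c a b = c b a) {k : Bool}
    {p q r w : α} (hpq : p < q) (hqr : q < r) (hT : IsMonoTriangle c k p q r) (hwp : w < p)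
    (hw : c w q = k ∨ c w r = k) : HasMonoOrderedPan c := by
  obtain ⟨hpq', hpr', hqr'⟩ := hT
  rcases hw with hw | hw
  · refine ⟨w, q, p, r, ?_⟩
    grind
  · refine ⟨w, r, p, q, ?_⟩
    grind

theorem hasMonoOrderedPan_of_pendant_above (hc : ∀ a b, c a b = c b a) {k : Bool}
    {p q r w : α} (hpq : p < q) (hqr : q < r) (hT : IsMonoTriangle c k p q r) (hqw : q < w)
    (hwr : w ≠ r) (hpw : c p w = k) : HasMonoOrderedPan c := by
  obtain ⟨hpq', hpr', hqr'⟩ := hT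
  refine ⟨w, p, q, r, ?_⟩
  grind

end

/-- The ordered Ramsey number of the (e₃,2)-ordering of the 3-pan is at most 9: every ordered 2-coloring on 9 vertices contains distinct vertices x1,x2,x3,x4 (playing e1,e2,e3,e4 of the 3-pan) whose four edges all have the same color and such that x3 is the 2nd smallest of the four (exactly one other chosen vertex is smaller). -/
theorem ordered_ramsey_pan_e3_2_le_nine
    (c : Fin 9 → Fin 9 → Bool) (hc : ∀ a b, c a b = c b a) :
    ∃ x1 x2 x3 x4 : Fin 9,
      x1 ≠ x2 ∧ x1 ≠ x3 ∧ x1 ≠ x4 ∧ x2 ≠ x3 ∧ x2 ≠ x4 ∧ x3 ≠ x4 ∧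
      c x1 x2 = c x2 x3 ∧ c x2 x3 = c x2 x4 ∧ c x2 x4 = c x3 x4 ∧
      ((if x1 < x3 then 1 else 0) + (if x2 < x3 then 1 else 0) + (if x4 < x3 then 1 else 0) : ℕ) = 1 := by
  show HasMonoOrderedPan c
  by_contra hpan
  obtain ⟨a, b, d, h3a, hab, hbd, k, habd⟩ := exists_isMonoTriangle_of_five_le_card (c := c)
    (v := 3) (s := Finset.Ioi 3) (fun _ => Finset.mem_Ioi.1) (by decide)
  have hbelow : ∀ v < a, c v b ≠ k ∧ c v d ≠ k := fun v hv =>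
    ⟨fun h => hpan (hasMonoOrderedPan_of_pendant_below hc hab hbd habd hv (.inl h)),
      fun h => hpan (hasMonoOrderedPan_of_pendant_below hc hab hbd habd hv (.inr h))⟩
  have hlow : ∀ u v : Fin 9, u < v → v < 3 → c u v = k := fun u v huv hv => by
    by_contra h
    have hva : v < a := by omega
    obtain ⟨hub, hud⟩ := hbelow u (huv.trans hva)
    exact hpan (hasMonoOrderedPan_of_pendant_above hc huv (hva.trans (hab.trans hbd))
      (isMonoTriangle_not_of_ne h hud (hbelow v hva).2) (hva.trans hab) hbd.ne (Bool.eq_not.2 hub))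
  have hzero : ∀ w : Fin 9, 3 ≤ w → c 0 w ≠ k := fun w hw h => by
    refine hpan (hasMonoOrderedPan_of_pendant_above hc (q := 1) (r := 2) ?_ ?_
      ⟨hlow 0 1 ?_ ?_, hlow 0 2 ?_ ?_, hlow 1 2 ?_ ?_⟩ ?_ ?_ h) <;> omega
  have hmid : ∀ u v : Fin 9, 3 ≤ u → u < v → v ≤ 6 → c u v = k := fun u v hu huv hv => by
    by_contra h
    refine hpan (hasMonoOrderedPan_of_pendant_above hc (w := 7) ?_ huv
      (isMonoTriangle_not_of_ne (hzero u hu) (hzero v ?_) h) ?_ ?_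
      (Bool.eq_not.2 (hzero 7 ?_))) <;> omega
  refine hpan (hasMonoOrderedPan_of_pendant_above hc (p := 3) (q := 4) (r := 5) (w := 6) ?_ ?_
    ⟨hmid 3 4 ?_ ?_ ?_, hmid 3 5 ?_ ?_ ?_, hmid 4 5 ?_ ?_ ?_⟩ ?_ ?_ (hmid 3 6 ?_ ?_ ?_)) <;> decide
end

section
/- The ordered Ramsey number of the (d_1,2)-ordering of the diamond graph is at most 16: every ordered 2-coloring on 16 vertices contains distinct vertices x1,x2,x3,x4 such that the edges {x1,x2},{x1,x3},{x2,x3},{x2,x4},{x3,x4} all have the same color and x1 is the 2nd smallest of x1,x2,x3,x4. -/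
/-!
Take a vertex `v` with thirteen vertices above it; by pigeonhole seven of them, forming `S`, are
joined to `v` in one colour `X`. If some `q ∈ S` has an `X`-neighbour in `S` below it and a second
`X`-neighbour in `S`, these three vertices together with `v` span an `X`-coloured `K₄` minus an edge
avoiding `v`, the least of the four, so a suitable vertex plays `d₁`. Otherwise the `X`-edges inside
`S` form stars hanging upwards from their least vertex, so the vertices of `S` without an
`X`-neighbour above them make up at least half of `S`; four of them span a `K₄` in the other colour.
-/

open Finset

section

variable {α : Type*} [LinearOrder α]

def HasMonoDiamondD1Two (c : α → α → Bool) : Prop :=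
  ∃ x1 x2 x3 x4 : α,
    x1 ≠ x2 ∧ x1 ≠ x3 ∧ x1 ≠ x4 ∧ x2 ≠ x3 ∧ x2 ≠ x4 ∧ x3 ≠ x4 ∧
    c x1 x2 = c x1 x3 ∧ c x1 x3 = c x2 x3 ∧ c x2 x3 = c x2 x4 ∧ c x2 x4 = c x3 x4 ∧
    ((if x2 < x1 then 1 else 0) + (if x3 < x1 then 1 else 0) + (if x4 < x1 then 1 else 0) : ℕ) = 1

variable {c : α → α → Bool} {X : Bool}

lemma hasMonoDiamondD1Two_of_missing_two_four (hc : ∀ a b, c a b = c b a) {w₁ w₂ w₃ w₄ : α}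
    (h₁₂ : w₁ < w₂) (h₂₃ : w₂ < w₃) (h₃₄ : w₃ < w₄)
    (e₁₂ : c w₁ w₂ = X) (e₁₃ : c w₁ w₃ = X) (e₂₃ : c w₂ w₃ = X)
    (e₁₄ : c w₁ w₄ = X) (e₃₄ : c w₃ w₄ = X) : HasMonoDiamondD1Two c := by
  refine ⟨w₂, w₁, w₃, w₄, h₁₂.ne', h₂₃.ne, (h₂₃.trans h₃₄).ne, (h₁₂.trans h₂₃).ne,
    (h₁₂.trans (h₂₃.trans h₃₄)).ne, h₃₄.ne, by rw [hc, e₁₂, e₂₃], by rw [e₂₃, e₁₃],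
    by rw [e₁₃, e₁₄], by rw [e₁₄, e₃₄], ?_⟩
  simp [h₁₂, h₂₃.not_gt, (h₂₃.trans h₃₄).not_gt]

lemma hasMonoDiamondD1Two_of_missing_two_three (hc : ∀ a b, c a b = c b a) {w₁ w₂ w₃ w₄ : α}
    (h₁₂ : w₁ < w₂) (h₂₃ : w₂ < w₃) (h₃₄ : w₃ < w₄)
    (e₁₂ : c w₁ w₂ = X) (e₁₃ : c w₁ w₃ = X) (e₁₄ : c w₁ w₄ = X)
    (e₂₄ : c w₂ w₄ = X) (e₃₄ : c w₃ w₄ = X) : HasMonoDiamondD1Two c := by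
  refine ⟨w₂, w₁, w₄, w₃, h₁₂.ne', (h₂₃.trans h₃₄).ne, h₂₃.ne,
    (h₁₂.trans (h₂₃.trans h₃₄)).ne, (h₁₂.trans h₂₃).ne, h₃₄.ne', by rw [hc, e₁₂, e₂₄],
    by rw [e₂₄, e₁₄], by rw [e₁₄, e₁₃], by rw [e₁₃, hc, e₃₄], ?_⟩
  simp [h₁₂, h₂₃.not_gt, (h₂₃.trans h₃₄).not_gt]

lemma hasMonoDiamondD1Two_of_cherry (hc : ∀ a b, c a b = c b a) {v p q r : α}
    (hvp : v < p) (hvr : v < r) (ep : c v p = X) (eq : c v q = X) (er : c v r = X)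
    (hpq : p < q) (eqp : c q p = X) (eqr : c q r = X) (hrq : r ≠ q) (hrp : r ≠ p) :
    HasMonoDiamondD1Two c := by
  rcases hrq.lt_or_gt with hrq | hqr
  · rcases hrp.lt_or_gt with hrp | hpr
    · exact hasMonoDiamondD1Two_of_missing_two_three hc hvr hrp hpq er ep eq
        (by rw [hc, eqr]) (by rw [hc, eqp])
    · exact hasMonoDiamondD1Two_of_missing_two_three hc hvp hpr hrq ep er eq
        (by rw [hc, eqp]) (by rw [hc, eqr])
  · exact hasMonoDiamondD1Two_of_missing_two_four hc hvp hpq hqr ep eq (by rw [hc, eqp]) er eqr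

lemma card_le_two_mul_card_filter_of_no_cherry (hc : ∀ a b, c a b = c b a) {S : Finset α}
    (hS : ∀ p ∈ S, ∀ q ∈ S, ∀ r ∈ S, p < q → c q p = X → c q r = X → r ≠ q → r = p) :
    #S ≤ 2 * #{v ∈ S | ∀ u ∈ S, v < u → c v u = !X} := by
  set L := {v ∈ S | ∀ u ∈ S, v < u → c v u = !X}
  have hup : ∀ v ∈ S \ L, ∃ u ∈ S, v < u ∧ c v u = X := by
    intro v hv
    obtain ⟨hvS, hvL⟩ := mem_sdiff.1 hv
    simpa [L, hvS, Bool.eq_not_iff] using hvL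
  choose! f hfS hlt hfX using hup
  have hmaps : Set.MapsTo f ↑(S \ L) ↑L := by
    intro v hv
    have hvS := (mem_sdiff.1 hv).1
    refine mem_filter.2 ⟨hfS v hv, fun u hu hvu => Bool.eq_not_iff.2 fun hX => ?_⟩
    have := hS v hvS (f v) (hfS v hv) u hu (hlt v hv) (by rw [hc, hfX v hv]) hX hvu.ne'
    exact (hlt v hv).not_gt (this ▸ hvu)
  have hinj : Set.InjOn f ↑(S \ L) := by
    intro v₁ hv₁ v₂ hv₂ hf
    have hv₂lt : v₂ < f v₁ := hf ▸ hlt v₂ hv₂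
    exact (hS v₁ (mem_sdiff.1 hv₁).1 (f v₁) (hfS v₁ hv₁) v₂ (mem_sdiff.1 hv₂).1 (hlt v₁ hv₁)
      (by rw [hc, hfX v₁ hv₁]) (by rw [hc, hf, hfX v₂ hv₂]) hv₂lt.ne).symm
  have := card_le_card_of_injOn f hmaps hinj
  have := card_sdiff_add_card_eq_card (show L ⊆ S from filter_subset _ _)
  omega

lemma hasMonoDiamondD1Two_of_clique (hc : ∀ a b, c a b = c b a) {L : Finset α} (hL : 4 ≤ #L)
    (hmono : ∀ u ∈ L, ∀ v ∈ L, u < v → c u v = X) : HasMonoDiamondD1Two c := by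
  obtain ⟨t, htL, ht⟩ := exists_subset_card_eq hL
  set w := t.orderEmbOfFin ht
  have hw : ∀ i, w i ∈ L := fun i => htL (t.orderEmbOfFin_mem ht i)
  have hlt : ∀ i j : Fin 4, i < j → c (w i) (w j) = X := fun i j hij =>
    hmono _ (hw i) _ (hw j) (w.strictMono hij)
  exact hasMonoDiamondD1Two_of_missing_two_four hc (w.strictMono (by decide : (0 : Fin 4) < 1))
    (w.strictMono (by decide : (1 : Fin 4) < 2)) (w.strictMono (by decide : (2 : Fin 4) < 3))
    (hlt 0 1 (by decide)) (hlt 0 2 (by decide)) (hlt 1 2 (by decide)) (hlt 0 3 (by decide))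
    (hlt 2 3 (by decide))

lemma hasMonoDiamondD1Two_of_upper_mono_nbhd (hc : ∀ a b, c a b = c b a) {v : α}
    {S : Finset α} (hS : 7 ≤ #S) (hv : ∀ u ∈ S, v < u ∧ c v u = X) : HasMonoDiamondD1Two c := by
  by_cases hcherry : ∃ p ∈ S, ∃ q ∈ S, ∃ r ∈ S, p < q ∧ c q p = X ∧ c q r = X ∧ r ≠ q ∧ r ≠ p
  · obtain ⟨p, hp, q, hq, r, hr, hpq, eqp, eqr, hrq, hrp⟩ := hcherry
    exact hasMonoDiamondD1Two_of_cherry hc (hv p hp).1 (hv r hr).1 (hv p hp).2 (hv q hq).2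
      (hv r hr).2 hpq eqp eqr hrq hrp
  · push Not at hcherry
    have hL := card_le_two_mul_card_filter_of_no_cherry hc hcherry
    refine hasMonoDiamondD1Two_of_clique hc (X := !X)
      (L := {v ∈ S | ∀ u ∈ S, v < u → c v u = !X}) (by omega) fun u hu w hw huw => ?_
    exact (mem_filter.1 hu).2 w (mem_filter.1 hw).1 huw

theorem hasMonoDiamondD1Two_of_le_card_Ioi [LocallyFiniteOrderTop α] (hc : ∀ a b, c a b = c b a)
    (v : α) (hv : 13 ≤ #(Ioi v)) : HasMonoDiamondD1Two c := by
  obtain ⟨X, -, hX⟩ := exists_lt_card_fiber_of_mul_lt_card_of_maps_to (s := Ioi v) (t := univ)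
    (n := 6) (fun u _ => mem_univ (c v u)) (by simp; omega)
  refine hasMonoDiamondD1Two_of_upper_mono_nbhd hc (v := v) (X := X) hX fun u hu => ?_
  obtain ⟨hu, huX⟩ := mem_filter.1 hu
  exact ⟨mem_Ioi.1 hu, huX⟩

end

/-- The ordered Ramsey number of the (d₁,2)-ordering of the diamond graph is at most 16: every ordered 2-coloring on 16 vertices contains distinct vertices x1,x2,x3,x4 (playing d1,d2,d3,d4) whose five edges all have the same color and such that x1 is the 2nd smallest of the four (exactly one other chosen vertex is smaller). -/
theorem ordered_ramsey_diamond_d1_2_le_sixteen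
    (c : Fin 16 → Fin 16 → Bool) (hc : ∀ a b, c a b = c b a) :
    ∃ x1 x2 x3 x4 : Fin 16,
      x1 ≠ x2 ∧ x1 ≠ x3 ∧ x1 ≠ x4 ∧ x2 ≠ x3 ∧ x2 ≠ x4 ∧ x3 ≠ x4 ∧
      c x1 x2 = c x1 x3 ∧ c x1 x3 = c x2 x3 ∧ c x2 x3 = c x2 x4 ∧ c x2 x4 = c x3 x4 ∧
      ((if x2 < x1 then 1 else 0) + (if x3 < x1 then 1 else 0) + (if x4 < x1 then 1 else 0) : ℕ) = 1 :=
  hasMonoDiamondD1Two_of_le_card_Ioi hc 0 (by decide)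
end

section
/- The ordered Ramsey number of the (d_2,1)-ordering of the diamond graph is at most 13: every ordered 2-coloring on 13 vertices contains distinct vertices x1,x2,x3,x4 such that the edges {x1,x2},{x1,x3},{x2,x3},{x2,x4},{x3,x4} all have the same color and x2 is the smallest of x1,x2,x3,x4. -/
/-!
Let `v` be the least vertex. Among the twelve vertices above it, a set `S` of six is joined to `v`
in one colour `k`. If some `x ∈ S` has two `k`-neighbours `y, z ∈ S`, then `y, v, x, z` is a
`k`-diamond with `v` as `d₂`. Otherwise every vertex of `S` has at most one `k`-neighbour in `S`, so
the least vertex of `S` has at least four `!k`-neighbours in `S`, and one of them, `x`, has at least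
two `!k`-neighbours among the other three; with `x` as `d₃` this is a `!k`-diamond.
-/

open Finset

namespace OrderedRamsey

variable {α : Type*} (c : α → α → Bool)

/-- The edges are read from `x2` and from `x3` outwards, so no symmetry of `c` is needed. -/
def IsMonoDiamond [LinearOrder α] (k : Bool) (x1 x2 x3 x4 : α) : Prop :=
  x2 < x1 ∧ x2 < x3 ∧ x2 < x4 ∧ x1 ≠ x3 ∧ x1 ≠ x4 ∧ x3 ≠ x4 ∧
    c x2 x1 = k ∧ c x2 x3 = k ∧ c x2 x4 = k ∧ c x3 x1 = k ∧ c x3 x4 = k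

section ColorNbrs

variable [DecidableEq α] {k : Bool} {S T : Finset α} {x y : α}

def colorNbrs (k : Bool) (S : Finset α) (x : α) : Finset α :=
  {y ∈ S.erase x | c x y = k}

lemma mem_colorNbrs : y ∈ colorNbrs c k S x ↔ y ≠ x ∧ y ∈ S ∧ c x y = k := by
  simp [colorNbrs, and_assoc]

lemma colorNbrs_subset : colorNbrs c k S x ⊆ S :=
  fun _ hy => ((mem_colorNbrs c).1 hy).2.1

lemma colorNbrs_mono (h : T ⊆ S) : colorNbrs c k T x ⊆ colorNbrs c k S x :=
  filter_subset_filter _ (erase_subset_erase _ h)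

lemma card_colorNbrs_add_card_colorNbrs_not (hx : x ∈ S) :
    #(colorNbrs c k S x) + #(colorNbrs c (!k) S x) = #S - 1 := by
  simp only [colorNbrs, Bool.eq_not]
  rw [card_filter_add_card_filter_not, card_erase_of_mem hx]

lemma sub_two_le_card_colorNbrs_not (hx : x ∈ S) (h : #(colorNbrs c k S x) ≤ 1) :
    #S - 2 ≤ #(colorNbrs c (!k) S x) := by
  have := card_colorNbrs_add_card_colorNbrs_not c (k := k) hx
  omega

end ColorNbrs

variable [LinearOrder α] {k : Bool}

lemma exists_isMonoDiamond_not_of_card_colorNbrs_le_one {S : Finset α} (hS : 6 ≤ #S)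
    (hsparse : ∀ x ∈ S, #(colorNbrs c k S x) ≤ 1) :
    ∃ x1 x2 x3 x4, IsMonoDiamond c (!k) x1 x2 x3 x4 := by
  have hne : S.Nonempty := card_pos.mp (by omega)
  set x2 := S.min' hne
  have hx2 : x2 ∈ S := S.min'_mem hne
  have hG : 4 ≤ #(colorNbrs c (!k) S x2) := by
    have := sub_two_le_card_colorNbrs_not c hx2 (hsparse x2 hx2)
    omega
  set G := colorNbrs c (!k) S x2
  obtain ⟨x3, hx3⟩ : G.Nonempty := card_pos.mp (by omega)
  have hGS : G ⊆ S := colorNbrs_subset c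
  have hx3_sparse : #(colorNbrs c k G x3) ≤ 1 :=
    (card_le_card (colorNbrs_mono c hGS)).trans (hsparse x3 (hGS hx3))
  have htwo : 1 < #(colorNbrs c (!k) G x3) := by
    have := sub_two_le_card_colorNbrs_not c hx3 hx3_sparse
    omega
  obtain ⟨x1, hx1, x4, hx4, h14⟩ := one_lt_card.mp htwo
  rw [mem_colorNbrs] at hx1 hx4
  have hG_mem : ∀ {y}, y ∈ G → x2 < y ∧ c x2 y = !k := fun {y} hy => by
    obtain ⟨hyx2, hyS, hcol⟩ := (mem_colorNbrs c).1 hy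
    exact ⟨S.min'_lt_of_mem_erase_min' hne (mem_erase.2 ⟨hyx2, hyS⟩), hcol⟩
  exact ⟨x1, x2, x3, x4, (hG_mem hx1.2.1).1, (hG_mem hx3).1, (hG_mem hx4.2.1).1, hx1.1, h14,
    hx4.1.symm, (hG_mem hx1.2.1).2, (hG_mem hx3).2, (hG_mem hx4.2.1).2, hx1.2.2, hx4.2.2⟩

lemma exists_isMonoDiamond_of_forall_lt_of_forall_color_eq {v : α} {S : Finset α}
    (hlt : ∀ s ∈ S, v < s) (hcol : ∀ s ∈ S, c v s = k) (hS : 6 ≤ #S) :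
    ∃ k' x1 x2 x3 x4, IsMonoDiamond c k' x1 x2 x3 x4 := by
  by_cases hcherry : ∃ x ∈ S, 1 < #(colorNbrs c k S x)
  · obtain ⟨x3, hx3, hcard⟩ := hcherry
    obtain ⟨x1, hx1, x4, hx4, h14⟩ := one_lt_card.mp hcard
    rw [mem_colorNbrs] at hx1 hx4
    exact ⟨k, x1, v, x3, x4, hlt x1 hx1.2.1, hlt x3 hx3, hlt x4 hx4.2.1, hx1.1, h14, hx4.1.symm,
      hcol x1 hx1.2.1, hcol x3 hx3, hcol x4 hx4.2.1, hx1.2.2, hx4.2.2⟩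
  · push Not at hcherry
    exact ⟨!k, exists_isMonoDiamond_not_of_card_colorNbrs_le_one c hS hcherry⟩

theorem exists_isMonoDiamond [Fintype α] (hα : 13 ≤ Fintype.card α) :
    ∃ k x1 x2 x3 x4, IsMonoDiamond c k x1 x2 x3 x4 := by
  have hne : (univ : Finset α).Nonempty := card_pos.mp (by rw [card_univ]; omega)
  set v := univ.min' hne
  have hlt : ∀ k, ∀ s ∈ colorNbrs c k univ v, v < s := fun k s hs =>
    univ.min'_lt_of_mem_erase_min' hne (mem_erase.2 ⟨((mem_colorNbrs c).1 hs).1, mem_univ s⟩)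
  have hcol : ∀ k, ∀ s ∈ colorNbrs c k univ v, c v s = k := fun k s hs =>
    ((mem_colorNbrs c).1 hs).2.2
  have hsplit := card_colorNbrs_add_card_colorNbrs_not c (k := true) (mem_univ v)
  rw [card_univ] at hsplit
  by_cases htrue : 6 ≤ #(colorNbrs c true univ v)
  · exact exists_isMonoDiamond_of_forall_lt_of_forall_color_eq c (hlt _) (hcol _) htrue
  · exact exists_isMonoDiamond_of_forall_lt_of_forall_color_eq c (hlt false) (hcol false)
      (by simp only [Bool.not_true] at hsplit; omega)

end OrderedRamsey

/-- The ordered Ramsey number of the (d₂,1)-ordering of the diamond graph is at most 13: every ordered 2-coloring on 13 vertices contains distinct vertices x1,x2,x3,x4 (playing d1,d2,d3,d4) whose five edges all have the same color and such that x2 is the smallest of the four. -/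
theorem ordered_ramsey_diamond_d2_1_le_thirteen
    (c : Fin 13 → Fin 13 → Bool) (hc : ∀ a b, c a b = c b a) :
    ∃ x1 x2 x3 x4 : Fin 13,
      x1 ≠ x2 ∧ x1 ≠ x3 ∧ x1 ≠ x4 ∧ x2 ≠ x3 ∧ x2 ≠ x4 ∧ x3 ≠ x4 ∧
      c x1 x2 = c x1 x3 ∧ c x1 x3 = c x2 x3 ∧ c x2 x3 = c x2 x4 ∧ c x2 x4 = c x3 x4 ∧
      ((if x1 < x2 then 1 else 0) + (if x3 < x2 then 1 else 0) + (if x4 < x2 then 1 else 0) : ℕ) = 0 := by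
  obtain ⟨k, x1, x2, x3, x4, h21, h23, h24, h13, h14, h34, e21, e23, e24, e31, e34⟩ :=
    OrderedRamsey.exists_isMonoDiamond c (by simp)
  refine ⟨x1, x2, x3, x4, h21.ne', h13, h14, h23.ne, h24.ne, h34, ?_, ?_, ?_, ?_, ?_⟩
  · rw [hc x1 x2, hc x1 x3, e21, e31]
  · rw [hc x1 x3, e31, e23]
  · rw [e23, e24]
  · rw [e24, e34]
  · simp [h21.not_gt, h23.not_gt, h24.not_gt]
end

section
/- The ordered Ramsey number of the (d_2,2)-ordering of the diamond graph is at most 17: every ordered 2-coloring on 17 vertices contains distinct vertices x1,x2,x3,x4 such that the edges {x1,x2},{x1,x3},{x2,x3},{x2,x4},{x3,x4} all have the same color and x2 is the 2nd smallest of x1,x2,x3,x4. -/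
/-! Call a set `S` of vertices above `u` whose edges to `u` all have colour `C` a `C`-fan at `u`.
If `w ∈ S` has two `C`-neighbours `y, z` in `S` above it, then `y, w, u, z` is a monochromatic
diamond with `w` second smallest. So the least vertex `w` of a `C`-fan `S` sends colour `!C` to
all but at most one of the other vertices of `S`, i.e. it carries a `!C`-fan of size `|S| - 2`
inside `S`. Doing this twice, starting from a fan of size `6`, produces a vertex `w'` of `S` with
two `C`-neighbours above it in `S`. By pigeonhole the least of `12` vertices carries a fan of
size `6`. -/

section

variable {α : Type*} [LinearOrder α] (c : α → α → Bool)

def HasMonochromaticDiamond : Prop :=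
  ∃ x1 x2 x3 x4 : α,
    x1 ≠ x2 ∧ x1 ≠ x3 ∧ x1 ≠ x4 ∧ x2 ≠ x3 ∧ x2 ≠ x4 ∧ x3 ≠ x4 ∧
    c x1 x2 = c x1 x3 ∧ c x1 x3 = c x2 x3 ∧ c x2 x3 = c x2 x4 ∧ c x2 x4 = c x3 x4 ∧
    ((if x1 < x2 then 1 else 0) + (if x3 < x2 then 1 else 0) + (if x4 < x2 then 1 else 0) : ℕ) = 1

def IsMonochromaticFan (C : Bool) (u : α) (S : Finset α) : Prop :=
  ∀ x ∈ S, u < x ∧ c u x = C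

variable {c}

theorem hasMonochromaticDiamond_of_isMonochromaticFan (hc : ∀ a b, c a b = c b a)
    {C : Bool} {u w : α} {S T : Finset α} (hS : IsMonochromaticFan c C u S) (hw : w ∈ S)
    (hT : IsMonochromaticFan c C w T) (hTS : T ⊆ S) (hT2 : 1 < T.card) :
    HasMonochromaticDiamond c := by
  obtain ⟨y, hy, z, hz, hyz⟩ := Finset.one_lt_card.1 hT2
  obtain ⟨huw, huw_c⟩ := hS w hw
  obtain ⟨hwy, hwy_c⟩ := hT y hy
  obtain ⟨hwz, hwz_c⟩ := hT z hz
  have huy_c := (hS y (hTS hy)).2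
  have huz_c := (hS z (hTS hz)).2
  refine ⟨y, w, u, z, hwy.ne', (huw.trans hwy).ne', hyz, huw.ne', hwz.ne, (huw.trans hwz).ne,
    ?_, ?_, ?_, ?_, ?_⟩
  · rw [hc y w, hc y u, hwy_c, huy_c]
  · rw [hc y u, hc w u, huy_c, huw_c]
  · rw [hc w u, huw_c, hwz_c]
  · rw [hwz_c, huz_c]
  · rw [if_neg hwy.not_gt, if_pos huw, if_neg hwz.not_gt]

theorem exists_isMonochromaticFan_not_of_not_hasMonochromaticDiamond
    (hc : ∀ a b, c a b = c b a) (hno : ¬ HasMonochromaticDiamond c)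
    {C : Bool} {u : α} {S : Finset α} (hS : IsMonochromaticFan c C u S) (hne : S.Nonempty) :
    ∃ w ∈ S, ∃ T ⊆ S, IsMonochromaticFan c (!C) w T ∧ S.card ≤ T.card + 2 := by
  classical
  set w := S.min' hne
  have hw : w ∈ S := S.min'_mem hne
  have hw_lt : ∀ x ∈ S.erase w, w < x := fun x hx =>
    (S.min'_le x (Finset.mem_of_mem_erase hx)).lt_of_ne (Finset.ne_of_mem_erase hx).symm
  have hsame : ((S.erase w).filter (c w · = C)).card ≤ 1 := by
    by_contra! h2
    refine hno (hasMonochromaticDiamond_of_isMonochromaticFan hc hS hw ?_ ?_ h2)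
    · intro x hx
      obtain ⟨hxS, hxc⟩ := Finset.mem_filter.1 hx
      exact ⟨hw_lt x hxS, hxc⟩
    · exact (Finset.filter_subset _ _).trans (Finset.erase_subset _ _)
  refine ⟨w, hw, (S.erase w).filter (¬ c w · = C),
    (Finset.filter_subset _ _).trans (Finset.erase_subset _ _), ?_, ?_⟩
  · intro x hx
    obtain ⟨hxS, hxc⟩ := Finset.mem_filter.1 hx
    exact ⟨hw_lt x hxS, Bool.eq_not.2 hxc⟩
  · have hsplit := Finset.card_filter_add_card_filter_not (s := S.erase w) (c w · = C)
    have herase := Finset.card_erase_of_mem hw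
    omega

theorem hasMonochromaticDiamond_of_six_le_card (hc : ∀ a b, c a b = c b a) {C : Bool} {u : α}
    {S : Finset α} (hS : IsMonochromaticFan c C u S) (hcard : 6 ≤ S.card) :
    HasMonochromaticDiamond c := by
  by_contra hno
  obtain ⟨w, -, T, hTS, hT, hTcard⟩ :=
    exists_isMonochromaticFan_not_of_not_hasMonochromaticDiamond hc hno hS
      (Finset.card_pos.1 (by omega))
  obtain ⟨w', hw', T', hT'T, hT', hT'card⟩ :=
    exists_isMonochromaticFan_not_of_not_hasMonochromaticDiamond hc hno hT
      (Finset.card_pos.1 (by omega))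
  rw [Bool.not_not] at hT'
  exact hno (hasMonochromaticDiamond_of_isMonochromaticFan hc hS (hTS hw') hT'
    (hT'T.trans hTS) (by omega))

theorem exists_isMonochromaticFan_card (u : α) {S : Finset α} (hS : ∀ x ∈ S, u < x) :
    ∃ C T, IsMonochromaticFan c C u T ∧ S.card ≤ 2 * T.card := by
  have hsplit := Finset.card_filter_add_card_filter_not (s := S) (c u · = true)
  have hfan : ∀ C, IsMonochromaticFan c C u (S.filter (c u · = C)) := fun C x hx =>
    ⟨hS x (Finset.mem_filter.1 hx).1, (Finset.mem_filter.1 hx).2⟩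
  simp only [Bool.not_eq_true] at hsplit
  rcases le_total (S.filter (c u · = false)).card (S.filter (c u · = true)).card with h | h
  · exact ⟨true, _, hfan true, by omega⟩
  · exact ⟨false, _, hfan false, by omega⟩

theorem hasMonochromaticDiamond_of_twelve_le_card [Fintype α] (hc : ∀ a b, c a b = c b a)
    (hα : 12 ≤ Fintype.card α) : HasMonochromaticDiamond c := by
  have hne : (Finset.univ : Finset α).Nonempty := Finset.univ_nonempty_iff.2 <|
    Fintype.card_pos_iff.1 (by omega)
  set u := Finset.univ.min' hne
  have hu : ∀ x ∈ Finset.univ.erase u, u < x := fun x hx =>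
    (Finset.univ.min'_le x (Finset.mem_univ x)).lt_of_ne (Finset.ne_of_mem_erase hx).symm
  obtain ⟨C, T, hT, hTcard⟩ := exists_isMonochromaticFan_card (c := c) u hu
  rw [Finset.card_erase_of_mem (Finset.mem_univ u), Finset.card_univ] at hTcard
  exact hasMonochromaticDiamond_of_six_le_card hc hT (by omega)

end

/-- The ordered Ramsey number of the (d₂,2)-ordering of the diamond graph is at most 17: every ordered 2-coloring on 17 vertices contains distinct vertices x1,x2,x3,x4 (playing d1,d2,d3,d4) whose five edges all have the same color and such that x2 is the 2nd smallest of the four (exactly one other chosen vertex is smaller). -/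
theorem ordered_ramsey_diamond_d2_2_le_seventeen
    (c : Fin 17 → Fin 17 → Bool) (hc : ∀ a b, c a b = c b a) :
    ∃ x1 x2 x3 x4 : Fin 17,
      x1 ≠ x2 ∧ x1 ≠ x3 ∧ x1 ≠ x4 ∧ x2 ≠ x3 ∧ x2 ≠ x4 ∧ x3 ≠ x4 ∧
      c x1 x2 = c x1 x3 ∧ c x1 x3 = c x2 x3 ∧ c x2 x3 = c x2 x4 ∧ c x2 x4 = c x3 x4 ∧
      ((if x1 < x2 then 1 else 0) + (if x3 < x2 then 1 else 0) + (if x4 < x2 then 1 else 0) : ℕ) = 1 :=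
  hasMonochromaticDiamond_of_twelve_le_card hc (by simp)
end

section
/- The ordered Ramsey number of the (e_2,1)-ordering of the 3-pan equals 7: every ordered 2-coloring on 7 vertices contains distinct vertices x1,x2,x3,x4 such that the edges {x1,x2},{x2,x3},{x2,x4},{x3,x4} all have the same color and x2 is the smallest of x1,x2,x3,x4; and there exists an ordered 2-coloring on 6 vertices containing no such configuration. -/
/-!
Call the larger neighbours of a vertex `u` joined to it in color `b` its `b`-up-neighbourhood. If
there is no monochromatic pan with smallest degree-3 vertex, a `b`-up-neighbourhood with at least
three vertices spans only edges of color `!b`: a `b`-edge inside it and a third vertex close a pan.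
At the least vertex of a `b`-up-neighbourhood of size four this yields a pan of color `!b`, so every
up-neighbourhood has at most three vertices.

So if `u` had six larger vertices, its two up-neighbourhoods `S ∋ w` and `T`, where `w` is the
least vertex above `u` and `b` the color of `uw`, would be triangles of colors `!b` and `b`. The
`!b`-up-neighbourhood of `w` contains the `!b`-edge `S \ {w}`, so it has at most two vertices, and
therefore `T` lies in the `b`-up-neighbourhood of `w` although `T` spans `b`-edges.

On six vertices, take red edges exactly `04`, `05` and the triangle `123`: the only
up-neighbourhood with three vertices is the blue one `{1, 2, 3}` of `0`, which spans no blue edge.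
-/

open Finset

namespace OrderedPan

variable {α : Type*} [LinearOrder α]

def HasMonoPan (c : α → α → Bool) : Prop :=
  ∃ b v p q r, v < p ∧ v < q ∧ v < r ∧ p ≠ q ∧ p ≠ r ∧ q ≠ r ∧
    c v p = b ∧ c v q = b ∧ c v r = b ∧ c q r = b

variable [LocallyFiniteOrderTop α] {c : α → α → Bool} {u : α} {b : Bool}

def upNeighbors (c : α → α → Bool) (u : α) (b : Bool) : Finset α :=
  (Ioi u).filter (c u · = b)

theorem mem_upNeighbors {x : α} : x ∈ upNeighbors c u b ↔ u < x ∧ c u x = b := by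
  simp [upNeighbors]

theorem card_upNeighbors_add_card_upNeighbors_not (c : α → α → Bool) (u : α) (b : Bool) :
    #(upNeighbors c u b) + #(upNeighbors c u !b) = #(Ioi u) := by
  simp only [upNeighbors, Bool.eq_not]
  exact card_filter_add_card_filter_not _

theorem pairwise_upNeighbors (hc : ¬ HasMonoPan c) (h3 : 3 ≤ #(upNeighbors c u b)) :
    (upNeighbors c u b : Set α).Pairwise (fun x y ↦ c x y = !b) := by
  intro x hx y hy hxy
  obtain ⟨z, hz, hzy⟩ := exists_mem_ne
    (lt_of_lt_of_le (by omega) (pred_card_le_card_erase (s := upNeighbors c u b) (a := x))) y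
  obtain ⟨hzx, hz⟩ := mem_erase.1 hz
  rw [mem_coe, mem_upNeighbors] at hx hy
  rw [mem_upNeighbors] at hz
  exact Bool.eq_not.2 fun hb ↦
    hc ⟨b, u, z, x, y, hz.1, hx.1, hy.1, hzx, hzy, hxy, hz.2, hx.2, hy.2, hb⟩

theorem card_upNeighbors_lt_three_of_pairwise (hc : ¬ HasMonoPan c) {t : Finset α}
    (hsub : t ⊆ upNeighbors c u b) (ht2 : 2 ≤ #t)
    (ht : (t : Set α).Pairwise (fun x y ↦ c x y = b)) : #(upNeighbors c u b) < 3 := by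
  by_contra! h3
  obtain ⟨x, hx, y, hy, hxy⟩ := one_lt_card.1 ht2
  exact Bool.not_ne_self b <|
    (pairwise_upNeighbors hc h3 (hsub hx) (hsub hy) hxy).symm.trans (ht hx hy hxy)

theorem card_upNeighbors_le_three (hc : ¬ HasMonoPan c) : #(upNeighbors c u b) ≤ 3 := by
  by_contra! h4
  set s := upNeighbors c u b
  have hs : s.Nonempty := card_pos.1 (by omega)
  have hpair := pairwise_upNeighbors hc h4.le
  have hsub : s.erase (s.min' hs) ⊆ upNeighbors c (s.min' hs) (!b) := fun x hx ↦
    mem_upNeighbors.2 ⟨min'_lt_of_mem_erase_min' s hs hx,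
      hpair (s.min'_mem hs) (mem_of_mem_erase hx) (ne_of_mem_erase hx).symm⟩
  have hcard : 3 ≤ #(s.erase (s.min' hs)) := by
    rw [card_erase_of_mem (s.min'_mem hs)]; omega
  have := card_upNeighbors_lt_three_of_pairwise hc hsub (by omega)
    (hpair.mono (coe_subset.2 (erase_subset _ _)))
  have := card_le_card hsub
  omega

theorem card_Ioi_le_five (hc : ¬ HasMonoPan c) (u : α) : #(Ioi u) ≤ 5 := by
  by_contra! h6
  have hne : (Ioi u).Nonempty := card_pos.1 (by omega)
  set w := (Ioi u).min' hne
  set b := c u w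
  have hsplit := card_upNeighbors_add_card_upNeighbors_not c u b
  set S := upNeighbors c u b
  set T := upNeighbors c u !b
  have hS_le : #S ≤ 3 := card_upNeighbors_le_three hc
  have hT_le : #T ≤ 3 := card_upNeighbors_le_three hc
  have hS3 : #S = 3 := by omega
  have hT3 : #T = 3 := by omega
  have hwS : w ∈ S := mem_upNeighbors.2 ⟨mem_Ioi.1 ((Ioi u).min'_mem hne), rfl⟩
  have hw_lt {x : α} (hx : u < x) (hxw : x ≠ w) : w < x :=
    min'_lt_of_mem_erase_min' _ hne (mem_erase.2 ⟨hxw, mem_Ioi.2 hx⟩)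
  have hS : (S : Set α).Pairwise (fun x y ↦ c x y = !b) := pairwise_upNeighbors hc hS3.ge
  have hT : (T : Set α).Pairwise (fun x y ↦ c x y = b) := by
    simpa using pairwise_upNeighbors hc hT3.ge
  have hSw : S.erase w ⊆ upNeighbors c w (!b) := fun x hx ↦
    mem_upNeighbors.2 ⟨hw_lt (mem_upNeighbors.1 (mem_of_mem_erase hx)).1 (ne_of_mem_erase hx),
      hS hwS (mem_of_mem_erase hx) (ne_of_mem_erase hx).symm⟩
  have hSw2 : #(S.erase w) = 2 := by rw [card_erase_of_mem hwS, hS3]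
  have hw_not : #(upNeighbors c w (!b)) < 3 := card_upNeighbors_lt_three_of_pairwise hc hSw
    hSw2.ge (hS.mono (coe_subset.2 (erase_subset _ _)))
  have hTw : T ⊆ upNeighbors c w b := by
    intro t ht
    obtain ⟨hut, hct⟩ := mem_upNeighbors.1 ht
    have htw : t ≠ w := by
      rintro rfl
      exact Bool.not_ne_self b hct.symm
    refine mem_upNeighbors.2 ⟨hw_lt hut htw, Bool.ne_not.1 fun hwt ↦ ?_⟩
    have htS : t ∉ S.erase w := fun h ↦
      Bool.not_ne_self b (hct.symm.trans (mem_upNeighbors.1 (mem_of_mem_erase h)).2)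
    have := card_le_card (insert_subset (mem_upNeighbors.2 ⟨hw_lt hut htw, hwt⟩) hSw)
    rw [card_insert_of_notMem htS, hSw2] at this
    omega
  have := card_upNeighbors_lt_three_of_pairwise hc hTw (by omega) hT
  have := card_le_card hTw
  omega

def panFreeColoring : Fin 6 → Fin 6 → Bool :=
  ![![false, false, false, false, true, true],
    ![false, false, true, true, false, false],
    ![false, true, false, true, false, false],
    ![false, true, true, false, false, false],
    ![true, false, false, false, false, false],
    ![true, false, false, false, false, false]]

end OrderedPan

open OrderedPan

/-- The ordered Ramsey number of the (e₂,1)-ordering of the 3-pan equals 7: every ordered 2-coloring on 7 vertices contains distinct vertices x1,x2,x3,x4 (playing e1,e2,e3,e4 of the 3-pan, edges {e1,e2},{e2,e3},{e2,e4},{e3,e4}) whose four edges all have the same color and such that x2 is the smallest of the four; and some ordered 2-coloring on 6 vertices contains no such configuration. -/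
theorem ordered_ramsey_pan_e2_1_eq_seven :
    (∀ c : Fin 7 → Fin 7 → Bool, (∀ a b, c a b = c b a) →
      ∃ x1 x2 x3 x4 : Fin 7,
        x1 ≠ x2 ∧ x1 ≠ x3 ∧ x1 ≠ x4 ∧ x2 ≠ x3 ∧ x2 ≠ x4 ∧ x3 ≠ x4 ∧
        c x1 x2 = c x2 x3 ∧ c x2 x3 = c x2 x4 ∧ c x2 x4 = c x3 x4 ∧
        ((if x1 < x2 then 1 else 0) + (if x3 < x2 then 1 else 0) + (if x4 < x2 then 1 else 0) : ℕ) = 0) ∧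
    (∃ c : Fin 6 → Fin 6 → Bool, (∀ a b, c a b = c b a) ∧
      ¬ ∃ x1 x2 x3 x4 : Fin 6,
        x1 ≠ x2 ∧ x1 ≠ x3 ∧ x1 ≠ x4 ∧ x2 ≠ x3 ∧ x2 ≠ x4 ∧ x3 ≠ x4 ∧
        c x1 x2 = c x2 x3 ∧ c x2 x3 = c x2 x4 ∧ c x2 x4 = c x3 x4 ∧
        ((if x1 < x2 then 1 else 0) + (if x3 < x2 then 1 else 0) + (if x4 < x2 then 1 else 0) : ℕ) = 0) := by
  refine ⟨fun c hsymm ↦ ?_, panFreeColoring, by decide, by decide⟩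
  have hpan : HasMonoPan c := by
    by_contra hc
    have := card_Ioi_le_five hc (0 : Fin 7)
    simp at this
  obtain ⟨b, v, p, q, r, hvp, hvq, hvr, hpq, hpr, hqr, hp, hq, hr, hqr'⟩ := hpan
  refine ⟨p, v, q, r, hvp.ne', hpq, hpr, hvq.ne, hvr.ne, hqr, ?_, ?_, ?_, ?_⟩
  · rw [hsymm, hp, hq]
  · rw [hq, hr]
  · rw [hr, hqr']
  · simp [hvp.not_gt, hvq.not_gt, hvr.not_gt]
end

section
/- For any n ≥ 3 and any N, suppose that every 2-coloring of the edges of the complete graph on N vertices contains a monochromatic n-cycle (i.e., distinct vertices y1,…,yn with the edges {y1,y2},{y2,y3},…,{y_{n−1},y_n},{y_n,y1} all the same color). Then for any i,l ∈ {1,…,n}, every ordered 2-coloring on N vertices contains a monochromatic copy of the 1-ordering of the path P_n assigning order-label l to its i-th vertex; that is, there exist distinct vertices x1,…,xn with the edges {x1,x2},…,{x_{n−1},x_n} all the same color such that x_i is the l-th smallest of x1,…,xn. In particular, R_<(H) ≤ R(C_n) for every 1-ordering H of P_n. -/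
/-!
Take a monochromatic `n`-cycle `y` in the coloring and let `p` be the vertex of the cycle having
exactly `l - 1` cycle vertices below it. Rotating the cycle so that `p` lands in position `i`,
and then dropping the edge that closes the cycle, gives a monochromatic path in which the
`i`-th vertex is the `l`-th smallest.
-/

open Finset

lemma Fin.exists_card_filter_lt_eq {α : Type*} [LinearOrder α] {n : ℕ} {y : Fin n → α}
    (hy : Function.Injective y) (m : Fin n) :
    ∃ p, #{k | y k < y p} = m := by
  have hmono : StrictMono (y ∘ Tuple.sort y) :=
    (Tuple.monotone_sort y).strictMono_of_injective (hy.comp (Tuple.sort y).injective)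
  refine ⟨Tuple.sort y m, ?_⟩
  calc #{k | y k < y (Tuple.sort y m)} = #{j | j < m} :=
        (card_equiv (Tuple.sort y) fun j => by simp [← hmono.lt_iff_lt]).symm
    _ = m := by rw [filter_gt_eq_Iio, Fin.card_Iio]

lemma Fin.forall_rel_add_one_iff {n : ℕ} [NeZero n] (P : Fin n → Fin n → Prop) :
    (∀ j : Fin n, P j (j + 1)) ↔
      (∀ (j : ℕ) (h : j + 1 < n), P ⟨j, Nat.lt_of_succ_lt h⟩ ⟨j + 1, h⟩) ∧
        P ⟨n - 1, Nat.sub_one_lt (NeZero.ne n)⟩ ⟨0, NeZero.pos n⟩ := by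
  have val_add_one (j : Fin n) : ((j + 1 : Fin n) : ℕ) = (j + 1) % n := by
    rw [Fin.val_add, Fin.val_one', Nat.add_mod_mod]
  have add_one_of_lt {j : ℕ} (h : j + 1 < n) :
      (⟨j, Nat.lt_of_succ_lt h⟩ + 1 : Fin n) = ⟨j + 1, h⟩ :=
    Fin.ext (by rw [val_add_one, Nat.mod_eq_of_lt h])
  have hn : n - 1 + 1 = n := Nat.sub_add_cancel (NeZero.pos n)
  refine ⟨fun hP => ⟨fun j h => add_one_of_lt h ▸ hP _, ?_⟩,
    fun ⟨hpath, hlast⟩ j => ?_⟩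
  · convert hP ⟨n - 1, by omega⟩ using 2
    rw [val_add_one, hn, Nat.mod_self]
  · by_cases hj : j.val + 1 < n
    · simpa [add_one_of_lt hj] using hpath j hj
    · have hjn : j.val + 1 = n := by omega
      convert hlast using 2
      · omega
      · rw [val_add_one, hjn, Nat.mod_self]

/-- If every 2-coloring of the edges of the complete graph on `N` vertices contains a
monochromatic `n`-cycle (`n ≥ 3`), then for any `i, l ∈ {1, …, n}` every ordered 2-coloring
on `N` vertices contains a monochromatic copy of the 1-ordering of the path `Pₙ` assigning
order-label `l` to its `i`-th vertex: distinct vertices `x 0, …, x (n-1)` with all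
consecutive edges the same color, in which the `(i-1)`-indexed vertex is the `l`-th
smallest (exactly `l - 1` of the chosen vertices are smaller than it).
In particular, `R_<(H) ≤ R(Cₙ)` for every 1-ordering `H` of `Pₙ`. -/
theorem ordered_ramsey_path_one_ordering_le_ramsey_cycle
    (n N : ℕ) (hn : 3 ≤ n)
    (hcycle : ∀ c : Fin N → Fin N → Bool, (∀ a b, c a b = c b a) →
      ∃ y : Fin n → Fin N, Function.Injective y ∧ ∃ b : Bool,
        (∀ (j : ℕ) (h : j + 1 < n), c (y ⟨j, by omega⟩) (y ⟨j + 1, h⟩) = b) ∧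
        c (y ⟨n - 1, by omega⟩) (y ⟨0, by omega⟩) = b) :
    ∀ (i l : ℕ) (hi : 1 ≤ i) (hi' : i ≤ n) (hl : 1 ≤ l) (hl' : l ≤ n),
      ∀ c : Fin N → Fin N → Bool, (∀ a b, c a b = c b a) →
        ∃ x : Fin n → Fin N, Function.Injective x ∧
          (∃ b : Bool, ∀ (j : ℕ) (h : j + 1 < n), c (x ⟨j, by omega⟩) (x ⟨j + 1, h⟩) = b) ∧
          (Finset.univ.filter fun k => x k < x ⟨i - 1, by omega⟩).card = l - 1 := by
  intro i l hi hi' hl hl' c hsym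
  have : NeZero n := ⟨by omega⟩
  obtain ⟨y, hy, b, hclosed⟩ := hcycle c hsym
  have hcyc : ∀ j : Fin n, c (y j) (y (j + 1)) = b :=
    (Fin.forall_rel_add_one_iff fun j k => c (y j) (y k) = b).mpr hclosed
  obtain ⟨p, hp⟩ := Fin.exists_card_filter_lt_eq hy ⟨l - 1, by omega⟩
  set r : Fin n := p - ⟨i - 1, by omega⟩
  have hrot : ∀ j : Fin n, c (y (j + r)) (y (j + 1 + r)) = b := fun j => by
    simpa only [add_right_comm] using hcyc (j + r)
  refine ⟨fun j => y (j + r), hy.comp (add_left_injective r), ⟨b, ?_⟩, ?_⟩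
  · exact ((Fin.forall_rel_add_one_iff fun j k => c (y (j + r)) (y (k + r)) = b).mp hrot).1
  · calc #{k | y (k + r) < y (⟨i - 1, _⟩ + r)} = #{k | y k < y p} :=
          card_equiv (Equiv.addRight r) fun k => by simp [r]
      _ = l - 1 := hp
end
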